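/- arXiv:0711.3708 — 5 statements merged into one kernel-verified Lean document; each statement's English description precedes it below -/
import Mathlib

section
/- Two elements of a free group commute if and only if they are both powers of a common element. -/
/-! A commuting pair generates an abelian subgroup, which is free by Nielsen–Schreier. A free group
on two distinct generators is not abelian (map it onto `S₃`), so this subgroup has at most one
generator and is therefore cyclic. -/

namespace FreeGroup

variable {α : Type*}

theorem eq_of_commute_of {a b : α} (h : Commute (of a) (of b)) : a = b := by
  classical
  by_contra hab
  let σ : α → Equiv.Perm (Fin 3) := fun s => if s = a then Equiv.swap 0 1 else Equiv.swap 1 2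
  have hσ : Commute (σ a) (σ b) := by simpa using h.map (lift σ)
  simp only [σ, if_pos rfl, if_neg (Ne.symm hab)] at hσ
  exact absurd hσ.eq (by decide)

theorem subsingleton_of_isMulCommutative [IsMulCommutative (FreeGroup α)] : Subsingleton α :=
  ⟨fun _ _ => eq_of_commute_of (mul_comm' _ _)⟩

instance isCyclic_of_subsingleton [Subsingleton α] : IsCyclic (FreeGroup α) := by
  cases isEmpty_or_nonempty α
  · exact _root_.isCyclic_of_subsingleton
  · have := uniqueOfSubsingleton (Classical.arbitrary α)
    infer_instance

end FreeGroup

theorem IsFreeGroup.isCyclic_of_isMulCommutative (G : Type*) [Group G] [IsFreeGroup G]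
    [IsMulCommutative G] : IsCyclic G := by
  let e := IsFreeGroup.toFreeGroup G
  have : IsMulCommutative (FreeGroup (Generators G)) :=
    .of_comm fun a b => e.symm.injective (by simp only [map_mul, mul_comm'])
  have := FreeGroup.subsingleton_of_isMulCommutative (α := Generators G)
  exact isCyclic_of_surjective e.symm.toMonoidHom e.symm.surjective

theorem free_group_commute_iff_common_power {S : Type*} (x y : FreeGroup S) :
    x * y = y * x ↔ ∃ (z : FreeGroup S) (m n : ℤ), x = z ^ m ∧ y = z ^ n := by
  refine ⟨fun hxy => ?_, fun ⟨z, m, n, hx, hy⟩ => hx ▸ hy ▸ zpow_mul_comm z m n⟩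
  let H := Subgroup.closure {x, y}
  have : IsMulCommutative H := Subgroup.isMulCommutative_closure (by
    rintro a (rfl | rfl) b (rfl | rfl) <;> first | rfl | exact hxy | exact hxy.symm)
  obtain ⟨z, hz⟩ := IsFreeGroup.isCyclic_of_isMulCommutative H |>.exists_zpow_surjective
  obtain ⟨m, hm⟩ := hz ⟨x, Subgroup.subset_closure (by simp)⟩
  obtain ⟨n, hn⟩ := hz ⟨y, Subgroup.subset_closure (by simp)⟩
  exact ⟨z, m, n, congrArg Subtype.val hm.symm, congrArg Subtype.val hn.symm⟩
end

section
/- The centralizer of a free generator a in a free group is exactly the cyclic subgroup generated by a. -/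
/-!
Let `w` be the reduced word of `x` and let `p` be the letter `a` or `a⁻¹`, chosen so that it does
not cancel against the first letter of `w`. Then `p w` is reduced, so if `x` commutes with `p`,
the reduced word of `x p` is `p w`. That word is a sublist of `w p` of the same length, hence
`p w = w p`, which forces `w = pⁿ`.
-/

theorem List.eq_replicate_of_cons_eq_append_singleton {α : Type*} {a : α} {l : List α}
    (h : a :: l = l ++ [a]) : l = List.replicate l.length a := by
  induction l with
  | nil => rfl
  | cons b l ih =>
    obtain ⟨rfl, hl⟩ := List.cons.inj h
    exact congrArg (a :: ·) (ih hl)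

namespace FreeGroup

variable {α : Type*}

theorem mk_singleton_mem_zpowers (a : α) (b : Bool) : mk [(a, b)] ∈ Subgroup.zpowers (of a) := by
  cases b
  · exact inv_mem (Subgroup.mem_zpowers (of a))
  · exact Subgroup.mem_zpowers (of a)

section DecidableEq

variable [DecidableEq α]

theorem toWord_mk_singleton_mul {p : α × Bool} {x : FreeGroup α}
    (hp : ∀ q ∈ x.toWord.head?, p.1 = q.1 → p.2 = q.2) : (mk [p] * x).toWord = p :: x.toWord := by
  rw [toWord_mul, toWord_mk, reduce_singleton, List.singleton_append]
  refine IsReduced.reduce_eq ?_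
  cases hw : x.toWord with
  | nil => exact IsReduced.singleton
  | cons q t => exact isReduced_cons_cons.2 ⟨hp q (by simp [hw]), hw ▸ isReduced_toWord⟩

theorem eq_pow_of_commute_mk_singleton {p : α × Bool} {x : FreeGroup α}
    (hx : Commute x (mk [p])) (hp : ∀ q ∈ x.toWord.head?, p.1 = q.1 → p.2 = q.2) :
    x = mk [p] ^ x.toWord.length := by
  have hsub : List.Sublist (p :: x.toWord) (x.toWord ++ [p]) := by
    simpa [hx.eq, toWord_mk_singleton_mul hp, toWord_mk] using toWord_mul_sublist x (mk [p])
  have hrep := List.eq_replicate_of_cons_eq_append_singleton (hsub.eq_of_length (by simp))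
  rw [pow_mk, List.flatten_replicate_singleton, ← hrep, mk_toWord]

end DecidableEq

theorem mem_zpowers_of_commute_of {a : α} {x : FreeGroup α} (hx : Commute x (of a)) :
    x ∈ Subgroup.zpowers (of a) := by
  classical
  obtain ⟨b, hb⟩ : ∃ b : Bool, ∀ q ∈ x.toWord.head?, a = q.1 → b = q.2 :=
    ⟨x.toWord.head?.elim true Prod.snd, fun q hq _ => by simp [Option.mem_def.1 hq]⟩
  obtain ⟨k, hk⟩ := Subgroup.mem_zpowers_iff.1 (mk_singleton_mem_zpowers a b)
  have hxb : Commute x (mk [(a, b)]) := hk ▸ hx.zpow_right k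
  rw [eq_pow_of_commute_mk_singleton hxb hb]
  exact pow_mem (mk_singleton_mem_zpowers a b) _

end FreeGroup

theorem free_group_centralizer_of_generator {S : Type*} (a : S) (x : FreeGroup S) :
    x * FreeGroup.of a = FreeGroup.of a * x ↔ ∃ n : ℤ, x = (FreeGroup.of a) ^ n := by
  refine ⟨fun hx => ?_, fun ⟨n, hn⟩ => hn ▸ ((Commute.refl _).zpow_left n).eq⟩
  obtain ⟨n, hn⟩ := Subgroup.mem_zpowers_iff.1 (FreeGroup.mem_zpowers_of_commute_of hx)
  exact ⟨n, hn.symm⟩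
end

section
/- (Bounded Merzlyakov substitution) For every natural number n and every q, there exist elements M₁, …, M_q of the free group F₂ on two generators such that the homomorphism from F(a₁, a₂, b₁, …, b_q) to F₂ fixing a₁, a₂ and sending each bⱼ to Mⱼ is injective on all elements of word length at most n: every nontrivial element of length ≤ n maps to a nontrivial element. -/
/-!
Write `a = of 0` and `c = of 1` in `F₂`, and send `b_j` to `c^N a c^N` with `N = (n + 1)(j + 1)`,
so that a letter `β = b_j^{±1}` goes to `c^e a^{±1} c^e` with `e = ±N`. Let `u β v` be a reduced
word of length `≤ n` with `u` a word in `a₁, a₂`. By induction on the length, the image of `β v`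
begins with the whole block `c^e`. It is `c^e a^{±1} c^e u' y`, where `u'` is a word in `a₁, a₂`
and `y` is either trivial or the image of the next `β' v'`, which begins with `c^{e'}`; the
`a^{±1}` survives because `c^e u' y` begins with a nonzero power of `c`. Its exponent is `e` plus
the leading `c`-exponent of `u'` (of size `≤ n < |e|`) if `u'` is not a power of `c`, and
`e + t + e'` if `u' = c^t`; since the exponents are distinct nonzero multiples of `n + 1`, the
latter vanishes only for `t = 0` and `β' = β⁻¹`, which reducedness excludes. Finally, `u` is too
short to cancel the block `c^e` that follows it.
-/

theorem List.takeWhile_append_of_exists_not {β : Type*} {p : β → Bool} {A B : List β}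
    (h : ∃ a ∈ A, ¬ p a) : (A ++ B).takeWhile p = A.takeWhile p := by
  rw [List.takeWhile_append, if_neg]
  obtain ⟨a, ha, hna⟩ := h
  exact fun hlen => hna (List.takeWhile_eq_self_iff.mp
    ((List.takeWhile_prefix p).eq_of_length hlen) a ha)

namespace FreeGroup

variable {α : Type*} (c : α)

theorem mk_singleton_false (x : α) : mk [(x, false)] = (of x)⁻¹ := by
  rw [of, inv_mk]
  rfl

theorem mk_eq_of_zpow {L : List (α × Bool)} (hL : ∀ p ∈ L, p.1 = c) :
    mk L = of c ^ (L.map fun p => if p.2 then (1 : ℤ) else -1).sum := by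
  induction L with
  | nil => rfl
  | cons p L ih =>
    obtain ⟨d, b⟩ := p
    obtain rfl : d = c := hL _ List.mem_cons_self
    rw [List.map_cons, List.sum_cons, zpow_add, ← ih fun p hp => hL p (List.mem_cons_of_mem _ hp),
      ← List.singleton_append, ← mul_mk]
    cases b
    · rw [if_neg Bool.false_ne_true, zpow_neg_one, mk_singleton_false]
    · rw [if_pos rfl, zpow_one]
      rfl

variable [DecidableEq α]

/-- The exponent `t` of the maximal power `of c ^ t` that the reduced word of `g` begins with. -/
def leadingExp (g : FreeGroup α) : ℤ :=
  ((g.toWord.takeWhile (·.1 = c)).map fun p => if p.2 then 1 else -1).sum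

theorem toWord_mul_of_fst_ne {x y : FreeGroup α}
    (h : ∀ p ∈ x.toWord.getLast?, ∀ p' ∈ y.toWord.head?, p.1 ≠ p'.1) :
    (x * y).toWord = x.toWord ++ y.toWord := by
  rw [toWord_mul]
  refine IsReduced.reduce_eq (List.isChain_append.mpr ⟨isReduced_toWord, isReduced_toWord, ?_⟩)
  exact fun p hp p' hp' hpp' => absurd hpp' (h p hp p' hp')

theorem toWord_of_zpow (t : ℤ) :
    (of c ^ t).toWord = List.replicate t.natAbs (c, decide (0 < t)) := by
  rcases t with m | m
  · rw [Int.ofNat_eq_natCast, zpow_natCast, toWord_of_pow, Int.natAbs_natCast]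
    cases m <;> simp
  · rw [zpow_negSucc, toWord_inv, toWord_of_pow]
    simp [invRev, List.map_replicate]

theorem fst_eq_of_mem_toWord_of_zpow {t : ℤ} {p : α × Bool} (hp : p ∈ (of c ^ t).toWord) :
    p.1 = c := by
  rw [toWord_of_zpow] at hp
  rw [List.eq_of_mem_replicate hp]

theorem exists_eq_of_zpow_leadingExp_mul (g : FreeGroup α) :
    ∃ h : FreeGroup α, (∀ p ∈ h.toWord.head?, p.1 ≠ c) ∧ g = of c ^ leadingExp c g * h := by
  refine ⟨mk (g.toWord.dropWhile (·.1 = c)), ?_, ?_⟩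
  · rw [toWord_mk, IsReduced.reduce_eq (isReduced_toWord.infix (List.dropWhile_suffix _).isInfix)]
    intro p hp
    have := List.head?_dropWhile_not (fun p : α × Bool => decide (p.1 = c)) g.toWord
    rw [Option.mem_def.mp hp] at this
    simpa using this
  · rw [leadingExp, ← mk_eq_of_zpow c fun p hp => by simpa using List.mem_takeWhile_imp hp,
      mul_mk, List.takeWhile_append_dropWhile, mk_toWord]

theorem toWord_of_zpow_mul {h : FreeGroup α} (hh : ∀ p ∈ h.toWord.head?, p.1 ≠ c) (t : ℤ) :
    (of c ^ t * h).toWord = (of c ^ t).toWord ++ h.toWord :=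
  toWord_mul_of_fst_ne fun p hp p' hp' => by
    rw [fst_eq_of_mem_toWord_of_zpow c (List.mem_of_mem_getLast? hp)]
    exact (hh p' hp').symm

theorem leadingExp_of_zpow_mul_of_fst_ne {h : FreeGroup α} (hh : ∀ p ∈ h.toWord.head?, p.1 ≠ c)
    (t : ℤ) : leadingExp c (of c ^ t * h) = t := by
  have hrest : h.toWord.takeWhile (·.1 = c) = [] := by
    rcases hL : h.toWord with _ | ⟨p, L⟩
    · rfl
    · exact List.takeWhile_cons_of_neg (by simpa using hh p (by simp [hL]))
  rw [leadingExp, toWord_of_zpow_mul c hh, List.takeWhile_append_of_pos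
    fun p hp => by simpa using fst_eq_of_mem_toWord_of_zpow c hp, hrest, List.append_nil,
    toWord_of_zpow, List.map_replicate, List.sum_replicate]
  split_ifs with ht <;> simp only [decide_eq_true_eq] at ht
  · simp [abs_of_pos ht]
  · simp [abs_of_nonpos (not_lt.mp ht)]

theorem leadingExp_of_zpow_mul (t : ℤ) (g : FreeGroup α) :
    leadingExp c (of c ^ t * g) = t + leadingExp c g := by
  obtain ⟨h, hh, hg⟩ := exists_eq_of_zpow_leadingExp_mul c g
  conv_lhs => rw [hg, ← mul_assoc, ← zpow_add]
  exact leadingExp_of_zpow_mul_of_fst_ne c hh _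

theorem norm_of_zpow (t : ℤ) : norm (of c ^ t) = t.natAbs := by
  rw [norm, toWord_of_zpow, List.length_replicate]

theorem natAbs_leadingExp_le_norm (g : FreeGroup α) : (leadingExp c g).natAbs ≤ norm g := by
  obtain ⟨h, hh, hg⟩ := exists_eq_of_zpow_leadingExp_mul c g
  calc (leadingExp c g).natAbs = (of c ^ leadingExp c g).toWord.length :=
        (norm_of_zpow c _).symm
    _ ≤ (of c ^ leadingExp c g * h).toWord.length := by
        rw [toWord_of_zpow_mul c hh, List.length_append]
        exact Nat.le_add_right _ _
    _ = norm g := by rw [← hg, norm]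

theorem fst_eq_of_mem_head?_of_leadingExp_ne_zero {g : FreeGroup α} (hg : leadingExp c g ≠ 0)
    {p : α × Bool} (hp : p ∈ g.toWord.head?) : p.1 = c := by
  by_contra hpc
  obtain ⟨L, hL⟩ : ∃ L, g.toWord = p :: L := by
    rcases h : g.toWord with _ | ⟨p', L⟩ <;> simp_all
  exact hg (by rw [leadingExp, hL, List.takeWhile_cons_of_neg (by simpa using hpc)]; rfl)

theorem leadingExp_mul_of_fst_getLast_ne {x z : FreeGroup α}
    (hx : ∃ p ∈ x.toWord.getLast?, p.1 ≠ c) (hz : ∀ p ∈ z.toWord.head?, p.1 = c) :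
    leadingExp c (x * z) = leadingExp c x := by
  obtain ⟨p, hp, hpc⟩ := hx
  have hglue : (x * z).toWord = x.toWord ++ z.toWord :=
    toWord_mul_of_fst_ne fun p' hp' p'' hp'' => by
      rw [Option.mem_unique hp' hp, hz p'' hp'']
      exact hpc
  rw [leadingExp, leadingExp, hglue, List.takeWhile_append_of_exists_not
    ⟨p, List.mem_of_mem_getLast? hp, by simpa using hpc⟩]

theorem exists_eq_of_zpow_or_leadingExp_mul_eq {s y : FreeGroup α}
    (hy : norm s < (leadingExp c y).natAbs) :
    (∃ t : ℤ, s = of c ^ t) ∨ leadingExp c (s * y) = leadingExp c s := by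
  obtain ⟨h, hh, hs⟩ := exists_eq_of_zpow_leadingExp_mul c s⁻¹
  set r := leadingExp c s⁻¹
  have hs' : s = h⁻¹ * of c ^ (-r) := by
    rw [← inv_inv s, hs, mul_inv_rev, zpow_neg]
  rcases eq_or_ne h 1 with rfl | hne
  · exact Or.inl ⟨-r, by simpa using hs'⟩
  right
  have hlast : ∃ p ∈ h⁻¹.toWord.getLast?, p.1 ≠ c := by
    obtain ⟨p, L, hL⟩ := List.exists_cons_of_ne_nil (mt toWord_eq_nil_iff.mp hne)
    refine ⟨(p.1, !p.2), ?_, hh p (by simp [hL])⟩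
    simp [toWord_inv, hL, invRev]
  have hr : r.natAbs ≤ norm s := (natAbs_leadingExp_le_norm c s⁻¹).trans norm_inv_eq.le
  have hry : leadingExp c (of c ^ (-r) * y) ≠ 0 := by
    rw [leadingExp_of_zpow_mul]
    omega
  rw [hs', mul_assoc, leadingExp_mul_of_fst_getLast_ne c hlast
      fun p => fst_eq_of_mem_head?_of_leadingExp_ne_zero c hry,
    leadingExp_mul_of_fst_getLast_ne c hlast
      fun p hp => fst_eq_of_mem_toWord_of_zpow c (List.mem_of_mem_head? hp)]

theorem mul_ne_one_of_norm_lt_natAbs_leadingExp {s y : FreeGroup α}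
    (hy : norm s < (leadingExp c y).natAbs) : s * y ≠ 1 := by
  intro h1
  have := natAbs_leadingExp_le_norm c s⁻¹
  rw [norm_inv_eq, ← eq_inv_of_mul_eq_one_right h1] at this
  omega

theorem fst_ne_of_mem_head?_mk_singleton_mul {p : α × Bool} (hp : p.1 ≠ c) {g : FreeGroup α}
    (hg : leadingExp c g ≠ 0) : ∀ p' ∈ (mk [p] * g).toWord.head?, p'.1 ≠ c := by
  have hglue : (mk [p] * g).toWord = p :: g.toWord :=
    toWord_mul_of_fst_ne fun p' hp' p'' hp'' => by
      rw [toWord_mk, reduce_singleton] at hp'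
      rw [List.getLast?_singleton, Option.mem_some_iff] at hp'
      rw [← hp', fst_eq_of_mem_head?_of_leadingExp_ne_zero c hg hp'']
      exact hp
  simpa [hglue] using hp

end FreeGroup

namespace BoundedMerzlyakov

open FreeGroup

variable (n q : ℕ)

def blockExp (j : Fin q) (ε : Bool) : ℤ := (n + 1) * if ε then (j + 1 : ℤ) else -(j + 1)

def word (j : Fin q) : FreeGroup (Fin 2) :=
  of 1 ^ blockExp n q j true * of 0 * of 1 ^ blockExp n q j true

def subst : FreeGroup (Fin (2 + q)) →* FreeGroup (Fin 2) :=
  FreeGroup.lift (Fin.addCases of (word n q))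

def castAddWord (L : List (Fin 2 × Bool)) : List (Fin (2 + q) × Bool) :=
  L.map fun x => (Fin.castAdd q x.1, x.2)

theorem subst_of_castAdd (i : Fin 2) : subst n q (of (Fin.castAdd q i)) = of i := by
  simp [subst]

theorem subst_of_natAdd (j : Fin q) : subst n q (of (Fin.natAdd 2 j)) = word n q j := by
  simp [subst]

@[simp]
theorem length_castAddWord (L : List (Fin 2 × Bool)) : (castAddWord q L).length = L.length :=
  List.length_map _

theorem mk_castAddWord (L : List (Fin 2 × Bool)) :
    mk (castAddWord q L) = map (Fin.castAdd q) (mk L) :=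
  map.mk.symm

theorem subst_mk_castAddWord (L : List (Fin 2 × Bool)) :
    subst n q (mk (castAddWord q L)) = mk L := by
  have : (subst n q).comp (map (Fin.castAdd q)) = MonoidHom.id _ := by
    ext i
    simp [subst]
  rw [mk_castAddWord]
  exact DFunLike.congr_fun this (mk L)

theorem subst_mk_natAdd (j : Fin q) (ε : Bool) :
    subst n q (mk [(Fin.natAdd 2 j, ε)]) =
      of 1 ^ blockExp n q j ε * (mk [(0, ε)] * of 1 ^ blockExp n q j ε) := by
  cases ε
  · have hneg : blockExp n q j false = -blockExp n q j true := by simp [blockExp]; ring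
    rw [mk_singleton_false, mk_singleton_false, _root_.map_inv, subst_of_natAdd, word, hneg,
      zpow_neg]
    group
  · rw [← of, subst_of_natAdd, word, ← of, mul_assoc]

theorem eq_castAddWord_or_eq_castAddWord_append_cons (L : List (Fin (2 + q) × Bool)) :
    (∃ L₀, L = castAddWord q L₀) ∨
      ∃ L₀ j ε rest, L = castAddWord q L₀ ++ (Fin.natAdd 2 j, ε) :: rest := by
  induction L with
  | nil => exact Or.inl ⟨[], rfl⟩
  | cons x L ih =>
    obtain ⟨x, ε⟩ := x
    cases x using Fin.addCases with
    | left i =>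
      rcases ih with ⟨L₀, rfl⟩ | ⟨L₀, j, ε', rest, rfl⟩
      · exact Or.inl ⟨(i, ε) :: L₀, rfl⟩
      · exact Or.inr ⟨(i, ε) :: L₀, j, ε', rest, rfl⟩
    | right j => exact Or.inr ⟨[], j, ε, L, rfl⟩

theorem lt_natAbs_blockExp (j : Fin q) (ε : Bool) : n < (blockExp n q j ε).natAbs := by
  have hk : 1 ≤ (if ε then (j + 1 : ℤ) else -(j + 1)).natAbs := by split <;> omega
  rw [blockExp, Int.natAbs_mul, show ((n : ℤ) + 1).natAbs = n + 1 by omega]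
  nlinarith

theorem blockExp_add_add_eq_zero {j j' : Fin q} {ε ε' : Bool} {t : ℤ} (ht : t.natAbs ≤ n)
    (h : blockExp n q j ε + t + blockExp n q j' ε' = 0) : t = 0 ∧ j = j' ∧ ε' = !ε := by
  set k : ℤ := if ε then (j + 1 : ℤ) else -(j + 1) with hk
  set k' : ℤ := if ε' then (j' + 1 : ℤ) else -(j' + 1) with hk'
  simp only [blockExp] at h
  have hdvd : ((n : ℤ) + 1) ∣ t := ⟨-(k + k'), by linarith⟩
  obtain rfl : t = 0 := Int.eq_zero_of_abs_lt_dvd hdvd (by rw [Int.abs_eq_natAbs]; omega)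
  have hkk : k + k' = 0 := by
    rcases mul_eq_zero.mp (show ((n : ℤ) + 1) * (k + k') = 0 by linarith) with h | h
    · omega
    · exact h
  refine ⟨rfl, ?_⟩
  cases ε <;> cases ε' <;> simp [hk, hk', Fin.ext_iff] at hkk ⊢ <;> omega

theorem blockExp_add_leadingExp_mul_ne_zero {j j' : Fin q} {ε ε' : Bool}
    {s y : FreeGroup (Fin 2)} (hs : norm s ≤ n) (hy : leadingExp 1 y = blockExp n q j' ε')
    (hcancel : ¬(s = 1 ∧ j = j' ∧ ε' = !ε)) : blockExp n q j ε + leadingExp 1 (s * y) ≠ 0 := by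
  have hy' := lt_natAbs_blockExp n q j' ε'
  rw [← hy] at hy'
  rcases exists_eq_of_zpow_or_leadingExp_mul_eq 1 (hs.trans_lt hy') with ⟨t, rfl⟩ | hlead
  · rw [leadingExp_of_zpow_mul, hy]
    rw [norm_of_zpow] at hs
    intro hsum
    obtain ⟨rfl, hjj, hεε⟩ :=
      blockExp_add_add_eq_zero n q hs (show blockExp n q j ε + t + blockExp n q j' ε' = 0 by omega)
    exact hcancel ⟨zpow_zero _, hjj, hεε⟩
  · have := lt_natAbs_blockExp n q j ε
    have := natAbs_leadingExp_le_norm 1 s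
    rw [hlead]
    omega

theorem leadingExp_subst_mk_natAdd_cons (rest : List (Fin (2 + q) × Bool))
    (hlen : rest.length ≤ n) (j : Fin q) (ε : Bool)
    (hred : IsReduced ((Fin.natAdd 2 j, ε) :: rest)) :
    leadingExp 1 (subst n q (mk ((Fin.natAdd 2 j, ε) :: rest))) = blockExp n q j ε := by
  induction hl : rest.length using Nat.strong_induction_on generalizing rest j ε with
  | _ m ih =>
  have hg : leadingExp 1 (of 1 ^ blockExp n q j ε * subst n q (mk rest)) ≠ 0 := by
    rw [leadingExp_of_zpow_mul]
    rcases eq_castAddWord_or_eq_castAddWord_append_cons q rest with ⟨L₀, rfl⟩ |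
      ⟨L₀, j', ε', rest', rfl⟩
    · have := lt_natAbs_blockExp n q j ε
      have := (natAbs_leadingExp_le_norm 1 (mk L₀)).trans (norm_mk_le (L₁ := L₀))
      simp only [length_castAddWord] at hlen
      rw [subst_mk_castAddWord]
      omega
    · simp only [List.length_append, length_castAddWord, List.length_cons] at hlen hl
      have hred' : IsReduced ((Fin.natAdd 2 j', ε') :: rest') :=
        hred.infix ⟨(Fin.natAdd 2 j, ε) :: castAddWord q L₀, [], by simp⟩
      rw [← mul_mk, _root_.map_mul, subst_mk_castAddWord]
      refine blockExp_add_leadingExp_mul_ne_zero n q (norm_mk_le.trans (by omega))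
        (ih rest'.length (by omega) rest' (by omega) j' ε' hred' rfl) ?_
      rintro ⟨h1, rfl, rfl⟩
      have hL₀ : castAddWord q L₀ = [] := by
        have hred₀ : IsReduced (castAddWord q L₀) := hred.infix ⟨[(Fin.natAdd 2 j, ε)], _, rfl⟩
        rw [← hred₀.reduce_eq, ← toWord_mk, mk_castAddWord, h1, _root_.map_one, toWord_one]
      rw [hL₀, List.nil_append, isReduced_cons_cons] at hred
      simp at hred
  rw [← List.singleton_append, ← mul_mk, _root_.map_mul, subst_mk_natAdd, mul_assoc, mul_assoc,
    leadingExp_of_zpow_mul_of_fst_ne 1 (fst_ne_of_mem_head?_mk_singleton_mul 1 zero_ne_one hg)]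

end BoundedMerzlyakov

open FreeGroup BoundedMerzlyakov in
theorem bounded_merzlyakov_substitution (n q : ℕ) :
    ∃ (M : Fin q → FreeGroup (Fin 2)) (φ : FreeGroup (Fin (2 + q)) →* FreeGroup (Fin 2)),
      (∀ i : Fin 2, φ (FreeGroup.of (Fin.castAdd q i)) = FreeGroup.of i) ∧
      (∀ j : Fin q, φ (FreeGroup.of (Fin.natAdd 2 j)) = M j) ∧
      (∀ w : FreeGroup (Fin (2 + q)), w ≠ 1 → (FreeGroup.toWord w).length ≤ n → φ w ≠ 1) := by
  refine ⟨word n q, subst n q, subst_of_castAdd n q, subst_of_natAdd n q, fun w hw hlen => ?_⟩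
  rw [← mk_toWord (x := w)] at hw ⊢
  rcases eq_castAddWord_or_eq_castAddWord_append_cons q w.toWord with ⟨L₀, hL⟩ |
    ⟨L₀, j, ε, rest, hL⟩
  · rw [hL, mk_castAddWord] at hw
    rw [hL, subst_mk_castAddWord]
    exact fun h1 => hw (by rw [h1, _root_.map_one])
  · have hred : IsReduced ((Fin.natAdd 2 j, ε) :: rest) :=
      isReduced_toWord.infix ⟨castAddWord q L₀, [], by rw [hL, List.append_nil]⟩
    simp only [hL, List.length_append, length_castAddWord, List.length_cons] at hlen
    rw [hL, ← mul_mk, _root_.map_mul, subst_mk_castAddWord]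
    apply mul_ne_one_of_norm_lt_natAbs_leadingExp 1
    rw [leadingExp_subst_mk_natAdd_cons n q rest (by omega) j ε hred]
    have := lt_natAbs_blockExp n q j ε
    have := norm_mk_le (L₁ := L₀)
    omega
end

section
/- In the free group on two generators a, b, for all x and y: x = 1 and y = 1 hold simultaneously if and only if the four commutators [x,a], [x,b], [y,a], [y,b] are all trivial; consequently a finite conjunction of equations W₁ = 1 ∧ W₂ = 1 over F₂ is equivalent to a finite conjunction of commutator equations. -/
private lemma cons_eq_append_singleton {β : Type*} :
    ∀ (l : List β) (g : β), g :: l = l ++ [g] → ∀ p ∈ l, p = g := by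
  intro l
  induction l with
  | nil => intro g _ p hp; simp at hp
  | cons h t ih =>
    intro g hgl p hp
    have h1 : g = h := by simpa using congrArg (List.head? ·) hgl
    subst h1
    have h2 : g :: t = t ++ [g] := by simpa using hgl
    rcases List.mem_cons.mp hp with hp | hp
    · exact hp
    · exact ih g h2 p hp

private lemma letters_aux {α : Type*} [DecidableEq α] (w : List (α × Bool)) (i : α)
    (hred : FreeGroup.reduce w = w)
    (hE : FreeGroup.reduce (w ++ [(i, true)]) = FreeGroup.reduce ((i, true) :: w)) :
    ∀ p ∈ w, p.1 = i := by
  -- compute the left side via invRev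
  have hinvred : FreeGroup.reduce (FreeGroup.invRev w) = FreeGroup.invRev w := by
    rw [FreeGroup.reduce_invRev, hred]
  have hL : FreeGroup.reduce (w ++ [(i, true)]) =
      FreeGroup.invRev (FreeGroup.reduce ((i, false) :: FreeGroup.invRev w)) := by
    have h1 : FreeGroup.invRev (w ++ [(i, true)]) = (i, false) :: FreeGroup.invRev w := by
      simp [FreeGroup.invRev]
    rw [← FreeGroup.invRev_invRev (L₁ := FreeGroup.reduce (w ++ [(i, true)])),
      ← FreeGroup.reduce_invRev, h1]
  rcases w with _ | ⟨y, ys⟩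
  · intro p hp; simp at hp
  · rcases hzcases : FreeGroup.invRev (y :: ys) with _ | ⟨z, zs⟩
    · exfalso
      have := congrArg List.length hzcases
      simp [FreeGroup.invRev_length] at this
    -- compute reduce ((i,true) :: w)
    have hR : FreeGroup.reduce ((i, true) :: y :: ys) =
        if i = y.1 ∧ true = !y.2 then ys else (i, true) :: y :: ys := by
      rw [FreeGroup.reduce.cons, hred]
    have hL2 : FreeGroup.reduce ((i, false) :: FreeGroup.invRev (y :: ys)) =
        if i = z.1 ∧ false = !z.2 then zs else (i, false) :: z :: zs := by
      rw [FreeGroup.reduce.cons, hinvred, hzcases]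
    rw [hL, hL2] at hE
    rw [hR] at hE
    by_cases hy : i = y.1 ∧ true = !y.2 <;> by_cases hz : i = z.1 ∧ false = !z.2
    · -- both cancel: w = ys ++ [(i,false)] and w = (i,false) :: ys
      rw [if_pos hy, if_pos hz] at hE
      -- hE : invRev zs = ys
      obtain ⟨hy1, hy2⟩ := hy
      obtain ⟨hz1, hz2⟩ := hz
      have hyval : y = (i, false) := by
        obtain ⟨y1, y2⟩ := y
        cases y2
        · rw [show y1 = i from hy1.symm]
        · exact absurd hy2 (by simp)
      have hzval : z = (i, true) := by
        obtain ⟨z1, z2⟩ := z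
        cases z2
        · exact absurd hz2 (by simp)
        · rw [show z1 = i from hz1.symm]
      have hw2 : y :: ys = FreeGroup.invRev (z :: zs) := by
        rw [← hzcases, FreeGroup.invRev_invRev]
      have : y :: ys = FreeGroup.invRev zs ++ [(z.1, !z.2)] := by
        rw [hw2]; simp [FreeGroup.invRev]
      rw [hE, hzval, hyval] at this
      -- this : (i,false) :: ys = ys ++ [(i, false)]
      have hall := cons_eq_append_singleton ys (i, false) (by simpa using this)
      intro p hp
      rcases List.mem_cons.mp hp with hp | hp
      · rw [hp, hyval]
      · rw [hall p hp]
    · -- length contradiction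
      rw [if_pos hy, if_neg hz] at hE
      exfalso
      have h6 := congrArg List.length hE
      have hlen := congrArg List.length hzcases
      simp [FreeGroup.invRev_length] at h6 hlen
      omega
    · rw [if_neg hy, if_pos hz] at hE
      exfalso
      have := congrArg List.length hE
      have hlen : zs.length + 1 = (y :: ys).length := by
        have := congrArg List.length hzcases
        simpa [FreeGroup.invRev_length] using this.symm
      simp [FreeGroup.invRev_length] at this hlen
      omega
    · -- no cancellation: w ++ [(i,true)] = (i,true) :: w
      rw [if_neg hy, if_neg hz] at hE
      have hw2 : (i, false) :: z :: zs = FreeGroup.invRev ((y :: ys) ++ [(i, true)]) := by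
        rw [← hzcases]; simp [FreeGroup.invRev]
      rw [hw2, FreeGroup.invRev_invRev] at hE
      -- hE : (y :: ys) ++ [(i,true)] = (i,true) :: y :: ys
      have hall := cons_eq_append_singleton (y :: ys) (i, true) hE.symm
      intro p hp
      rw [hall p hp]

private lemma letters_of_commute {α : Type*} [DecidableEq α] (x : FreeGroup α) (i : α)
    (h : x * FreeGroup.of i = FreeGroup.of i * x) :
    ∀ p ∈ x.toWord, p.1 = i := by
  apply letters_aux x.toWord i x.reduce_toWord
  have hx : x = FreeGroup.mk x.toWord := (FreeGroup.mk_toWord).symm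
  have h2 : (x * FreeGroup.of i).toWord = (FreeGroup.of i * x).toWord := by rw [h]
  rwa [hx, show FreeGroup.of i = FreeGroup.mk [(i, true)] from rfl,
    FreeGroup.mul_mk, FreeGroup.mul_mk, FreeGroup.toWord_mk, FreeGroup.toWord_mk,
    List.singleton_append] at h2

theorem conjunction_via_commutators (x y : FreeGroup Bool) :
    (x = 1 ∧ y = 1) ↔
      (x * FreeGroup.of false * x⁻¹ * (FreeGroup.of false)⁻¹ = 1 ∧
       x * FreeGroup.of true * x⁻¹ * (FreeGroup.of true)⁻¹ = 1 ∧
       y * FreeGroup.of false * y⁻¹ * (FreeGroup.of false)⁻¹ = 1 ∧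
       y * FreeGroup.of true * y⁻¹ * (FreeGroup.of true)⁻¹ = 1) := by
  constructor
  · rintro ⟨rfl, rfl⟩
    simp
  · rintro ⟨h1, h2, h3, h4⟩
    have key : ∀ z : FreeGroup Bool,
        z * FreeGroup.of false * z⁻¹ * (FreeGroup.of false)⁻¹ = 1 →
        z * FreeGroup.of true * z⁻¹ * (FreeGroup.of true)⁻¹ = 1 → z = 1 := by
      intro z hf ht
      have cf : z * FreeGroup.of false = FreeGroup.of false * z := by
        have h5 : z * FreeGroup.of false * z⁻¹ = FreeGroup.of false := mul_inv_eq_one.mp hf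
        calc z * FreeGroup.of false = (z * FreeGroup.of false * z⁻¹) * z := by group
        _ = FreeGroup.of false * z := by rw [h5]
      have ct : z * FreeGroup.of true = FreeGroup.of true * z := by
        have h5 : z * FreeGroup.of true * z⁻¹ = FreeGroup.of true := mul_inv_eq_one.mp ht
        calc z * FreeGroup.of true = (z * FreeGroup.of true * z⁻¹) * z := by group
        _ = FreeGroup.of true * z := by rw [h5]
      have lf := letters_of_commute z false cf
      have lt := letters_of_commute z true ct
      have : z.toWord = [] := by
        cases hzw : z.toWord with
        | nil => rfl
        | cons p t =>
          exfalso
          have hf' := lf p (by rw [hzw]; simp)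
          have ht' := lt p (by rw [hzw]; simp)
          rw [hf'] at ht'
          exact Bool.false_ne_true ht'
      exact FreeGroup.toWord_eq_nil_iff.mp this
    exact ⟨key x h1 h2, key y h3 h4⟩
end

section
/- In a free group, if xⁿ = yⁿ for some nonzero integer n, then x = y. -/
theorem free_group_unique_roots {S : Type*} (x y : FreeGroup S) (n : ℤ) (hn : n ≠ 0)
    (h : x ^ n = y ^ n) : x = y :=
  zpow_left_injective hn h
end
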